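/- arXiv:math/0503365 — 4 statements merged into one kernel-verified Lean document; each statement's English description precedes it below -/
import Mathlib

section
/- Let Λ ⊂ ℝⁿ be a lattice, α ∈ ℝⁿ, Q ≥ 0 an integer with kα ∉ Λ for 1 ≤ k ≤ Q, and let Λ(α,Q) = ⋃_{k=0}^{Q} (kα + Λ). If X ⊂ ℝⁿ is a measurable set with vol(X) > det(Λ)/(Q+1), then there exist two distinct points x₁, x₂ ∈ X such that x₁ − x₂ ∈ Λ(α,Q). -/
open MeasureTheory Set Filter Pointwise

noncomputable section

/-- The lattice `B·ℤⁿ` generated by an invertible matrix `B`. -/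
def latticeOf {n : ℕ} (B : Matrix (Fin n) (Fin n) ℝ) : Set (Fin n → ℝ) :=
  {x | ∃ z : Fin n → ℤ, x = B.mulVec fun i => (z i : ℝ)}

/-- The periodic lattice `Λ(α,Q) = ⋃_{k=0}^{Q} (kα + Λ)`. -/
def periodicLattice {n : ℕ} (B : Matrix (Fin n) (Fin n) ℝ) (α : Fin n → ℝ) (Q : ℕ) :
    Set (Fin n → ℝ) :=
  {x | ∃ k : ℕ, k ≤ Q ∧ ∃ y ∈ latticeOf B, x = (k : ℝ) • α + y}

/-- The `i`-th successive minimum of a set `L` with respect to the body `K`. -/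
def succMin {n : ℕ} (L K : Set (Fin n → ℝ)) (i : ℕ) : ℝ :=
  sInf {l : ℝ | 0 ≤ l ∧ i ≤ Module.finrank ℝ (Submodule.span ℝ (L ∩ l • K))}

/-- The first successive minimum: smallest `l ≥ 0` with a nonzero point of `L` in `l • K`. -/
def firstMin {n : ℕ} (L K : Set (Fin n → ℝ)) : ℝ :=
  sInf {l : ℝ | 0 ≤ l ∧ ∃ x ∈ L, x ≠ 0 ∧ x ∈ l • K}

/-- The norm induced by a `0`-symmetric convex body `K`. -/
def normK {n : ℕ} (K : Set (Fin n → ℝ)) (x : Fin n → ℝ) : ℝ :=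
  sInf {l : ℝ | 0 ≤ l ∧ x ∈ l • K}

/-- The dual lattice of `latticeOf B`. -/
def dualLattice {n : ℕ} (B : Matrix (Fin n) (Fin n) ℝ) : Set (Fin n → ℝ) :=
  {u | ∀ y ∈ latticeOf B, ∃ z : ℤ, ∑ i, u i * y i = z}

/-- The density of a densest packing of translates of `K`: the supremum of upper
densities (computed with cubical windows) over all packings by translates of `K`. -/
def packingDensity {n : ℕ} (K : Set (Fin n → ℝ)) : ℝ :=
  sSup {d : ℝ | ∃ C : Set (Fin n → ℝ),
    (C.Pairwise fun c₁ c₂ =>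
      Disjoint (interior ((c₁ + ·) '' K)) (interior ((c₂ + ·) '' K))) ∧
    d = limsup (fun R : ℝ =>
      (volume ((⋃ c ∈ C, (c + ·) '' K) ∩ {x | ∀ i, |x i| ≤ R})).toReal /
        (volume {x : Fin n → ℝ | ∀ i, |x i| ≤ R}).toReal) atTop}

/-!
The sets `X - kα`, `0 ≤ k ≤ Q`, all have volume `vol X`. If two of them meet, some `x + kα` and
`x + lα` lie in `X`. Otherwise their union has volume `(Q + 1) vol X > det Λ`, and Blichfeldt's
theorem gives two of its points `x`, `y` with `0 ≠ y - x ∈ Λ`, so that `x + kα, y + lα ∈ X`.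
Either way, ordering the two points of `X` so that `k ≤ l` makes their difference lie in
`(l - k)α + Λ`, and they are distinct because `jα ∉ Λ` for `1 ≤ j ≤ Q`.
-/

section PeriodicBlichfeldt

variable {G : Type*} [AddCommGroup G]

lemma exists_ne_sub_nsmul_mem_of_add_nsmul_mem {L : AddSubgroup G} {α : G} {Q : ℕ}
    (hα : ∀ k : ℕ, 1 ≤ k → k ≤ Q → k • α ∉ L) {X : Set G} {x y : G} {k l : ℕ}
    (hk : k ≤ Q) (hl : l ≤ Q) (hxk : x + k • α ∈ X) (hyl : y + l • α ∈ X)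
    (hxy : y - x ∈ L) (hne : (x, k) ≠ (y, l)) :
    ∃ x₁ ∈ X, ∃ x₂ ∈ X, x₁ ≠ x₂ ∧ ∃ d ≤ Q, x₁ - x₂ - d • α ∈ L := by
  wlog hkl : k ≤ l generalizing x y k l
  · exact this hl hk hyl hxk (by simpa using L.neg_mem hxy) hne.symm (by omega)
  obtain ⟨d, rfl⟩ := Nat.exists_eq_add_of_le hkl
  have hdiff : y + (k + d) • α - (x + k • α) - d • α = y - x := by
    rw [add_nsmul]; abel
  refine ⟨_, hyl, _, hxk, fun heq => ?_, d, by omega, hdiff ▸ hxy⟩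
  have hdα : d • α ∈ L := by
    have : d • α = -(y - x) := calc
      d • α = y + (k + d) • α - y - k • α := by rw [add_nsmul]; abel
      _ = -(y - x) := by rw [heq]; abel
    exact this ▸ L.neg_mem hxy
  obtain rfl : d = 0 := by
    by_contra hd
    exact hα d (Nat.one_le_iff_ne_zero.2 hd) (by omega) hdα
  exact hne (Prod.ext (by simpa using heq.symm) rfl)

theorem exists_ne_sub_nsmul_mem_of_measure_lt [MeasurableSpace G] [MeasurableAdd G]
    {μ : Measure G} [μ.IsAddLeftInvariant] {L : AddSubgroup G} [Countable L] {F : Set G}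
    (hF : IsAddFundamentalDomain L F μ) {α : G} {Q : ℕ}
    (hα : ∀ k : ℕ, 1 ≤ k → k ≤ Q → k • α ∉ L) {X : Set G} (hX : MeasurableSet X)
    (hvol : μ F < (Q + 1) * μ X) :
    ∃ x₁ ∈ X, ∃ x₂ ∈ X, x₁ ≠ x₂ ∧ ∃ d ≤ Q, x₁ - x₂ - d • α ∈ L := by
  set T : Fin (Q + 1) → Set G := fun k => (· + (k : ℕ) • α) ⁻¹' X
  have hT : ∀ k, MeasurableSet (T k) := fun k => hX.preimage (measurable_add_const _)
  by_cases hdisj : Pairwise (Function.onFun Disjoint T)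
  · have hμT : μ (⋃ k, T k) = (Q + 1) * μ X := by
      simp [T, measure_iUnion hdisj hT]
    obtain ⟨x, hx, _, hy, g, hg, rfl⟩ :=
      hF.exists_ne_zero_vadd_eq (MeasurableSet.iUnion hT).nullMeasurableSet (hμT ▸ hvol)
    obtain ⟨k, hxk⟩ := mem_iUnion.1 hx
    obtain ⟨l, hyl⟩ := mem_iUnion.1 hy
    refine exists_ne_sub_nsmul_mem_of_add_nsmul_mem hα (Nat.lt_succ_iff.1 k.2)
      (Nat.lt_succ_iff.1 l.2) hxk hyl ?_ ?_
    · simp [AddSubgroup.vadd_def]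
    · simp [AddSubgroup.vadd_def, hg]
  · obtain ⟨k, l, hkl, hTkl⟩ : ∃ k l, k ≠ l ∧ ¬Disjoint (T k) (T l) := by
      simpa [Pairwise] using hdisj
    obtain ⟨x, hxk, hxl⟩ := not_disjoint_iff.1 hTkl
    exact exists_ne_sub_nsmul_mem_of_add_nsmul_mem hα (Nat.lt_succ_iff.1 k.2)
      (Nat.lt_succ_iff.1 l.2) hxk hxl (by simp) (by simpa [Fin.val_inj] using hkl)

end PeriodicBlichfeldt

section LatticeOf

open Matrix

variable {n : ℕ} (B : Matrix (Fin n) (Fin n) ℝ) (hB : IsUnit B.det)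

def latticeBasis : Module.Basis (Fin n) ℝ (Fin n → ℝ) :=
  (Pi.basisFun ℝ (Fin n)).map (B.toLinearEquiv' (B.invertibleOfIsUnitDet hB))

lemma latticeBasis_apply (i : Fin n) : latticeBasis B hB i = fun j => B j i := by
  ext j
  rw [latticeBasis, Module.Basis.map_apply, Pi.basisFun_apply]
  change toLin' B (Pi.single i 1) j = B j i
  simp

lemma of_latticeBasis : of (latticeBasis B hB) = Bᵀ := by
  ext i j
  simp [latticeBasis_apply]

lemma mem_span_latticeBasis {x : Fin n → ℝ} :
    x ∈ Submodule.span ℤ (range (latticeBasis B hB)) ↔ x ∈ latticeOf B := by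
  have hsum : ∀ z : Fin n → ℤ, ∑ i, z i • latticeBasis B hB i = B *ᵥ fun i => (z i : ℝ) := by
    intro z
    ext j
    simp [latticeBasis_apply, mulVec, dotProduct, mul_comm]
  rw [Submodule.mem_span_range_iff_exists_fun]
  exact ⟨fun ⟨z, hz⟩ => ⟨z, hz ▸ hsum z⟩, fun ⟨z, hz⟩ => ⟨z, hz ▸ hsum z⟩⟩

lemma volume_fundamentalDomain_latticeBasis :
    volume (ZSpan.fundamentalDomain (latticeBasis B hB)) = ENNReal.ofReal |B.det| := by
  rw [ZSpan.volume_fundamentalDomain, of_latticeBasis, det_transpose]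

end LatticeOf

theorem stmt1 {n : ℕ} (B : Matrix (Fin n) (Fin n) ℝ) (hB : IsUnit B.det)
    (α : Fin n → ℝ) (Q : ℕ)
    (hα : ∀ k : ℕ, 1 ≤ k → k ≤ Q → (k : ℝ) • α ∉ latticeOf B)
    (X : Set (Fin n → ℝ)) (hX : MeasurableSet X)
    (hvol : volume X > ENNReal.ofReal (|B.det| / (Q + 1))) :
    ∃ x₁ ∈ X, ∃ x₂ ∈ X, x₁ ≠ x₂ ∧ x₁ - x₂ ∈ periodicLattice B α Q := by
  set b := latticeBasis B hB
  have : Countable (Submodule.span ℤ (range b)).toAddSubgroup :=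
    inferInstanceAs (Countable (Submodule.span ℤ (range b)))
  have hα' : ∀ k : ℕ, 1 ≤ k → k ≤ Q → k • α ∉ (Submodule.span ℤ (range b)).toAddSubgroup := by
    intro k hk hkQ
    rw [Submodule.mem_toAddSubgroup, mem_span_latticeBasis, ← Nat.cast_smul_eq_nsmul ℝ]
    exact hα k hk hkQ
  have hvol' : volume (ZSpan.fundamentalDomain b) < (Q + 1) * volume X := by
    rw [gt_iff_lt, ENNReal.ofReal_div_of_pos (by positivity),
      ENNReal.div_lt_iff (Or.inl (by positivity)) (by simp)] at hvol
    rw [volume_fundamentalDomain_latticeBasis, mul_comm]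
    convert hvol
    norm_cast
  obtain ⟨x₁, h₁, x₂, h₂, hne, k, hk, hmem⟩ := exists_ne_sub_nsmul_mem_of_measure_lt
    (ZSpan.isAddFundamentalDomain' b volume) hα' hX hvol'
  refine ⟨x₁, h₁, x₂, h₂, hne, k, hk, _, (mem_span_latticeBasis B hB).1 hmem, ?_⟩
  rw [Nat.cast_smul_eq_nsmul]
  abel
end
end

section
/- Let Λ ⊂ ℝⁿ be a lattice, let b₁,…,bₙ ∈ Λ and q₁,…,qₙ ∈ {0,…,Q}, and let α ∈ ℝⁿ. Suppose the vectors (bᵢ, qᵢ) ∈ ℝ^{n+1} span an n-dimensional lattice hyperplane L of the lattice Λ' = Λ × ℤ, with primitive orthogonal dual vector (u*, z) ∈ Λ* × ℤ. Then |det(b₁ − q₁α, …, bₙ − qₙα)| ≥ det(Λ) · |u*·α + z|. -/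
open MeasureTheory Set Filter Pointwise

noncomputable section

/-!
Put `cᵢ = (bᵢ, qᵢ)` and `w = (u*, z)`. Primitivity of `w` in the dual of `Λ' = Λ × ℤ` means
that the integers `w·e`, for `e` running over a basis of `Λ'`, have no common divisor `k ≥ 2`,
so by Bézout some `v ∈ Λ'` has `w·v = 1`. The `cᵢ` are independent and orthogonal to `w`, hence
span `ker w`; so the linear form `x ↦ det(c₁, …, cₙ, x)` vanishes on `ker w` and equals
`(w·x) det(c, v)`. At `x = (α, 1)` the left side is `det(bᵢ − qᵢα)` (a Schur complement), and
`c₁, …, cₙ, v` are independent vectors of `Λ'`, so `|det(c, v)| ≥ det Λ' = |det B|`.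
-/

open Matrix

theorem Int.exists_dotProduct_eq_one_of_forall_not_dvd {ι : Type*} [Fintype ι] (c : ι → ℤ)
    (h : ∀ k : ℕ, 2 ≤ k → ∃ i, ¬(k : ℤ) ∣ c i) : ∃ ζ : ι → ℤ, c ⬝ᵥ ζ = 1 := by
  obtain ⟨ζ, hζ⟩ := Finset.gcd_eq_sum_mul Finset.univ c
  refine ⟨ζ, ?_⟩
  change _ = c ⬝ᵥ ζ at hζ
  rw [← hζ]
  set g := Finset.univ.gcd c
  have hg : 0 ≤ g := Int.nonneg_of_normalize_eq_self Finset.normalize_gcd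
  have hdvd (i : ι) : g ∣ c i := Finset.gcd_dvd (Finset.mem_univ i)
  have hg0 : g ≠ 0 := by
    obtain ⟨i, hi⟩ := h 2 le_rfl
    intro hg0
    have hci := hdvd i
    rw [hg0, zero_dvd_iff] at hci
    simp [hci] at hi
  by_contra hg1
  obtain ⟨i, hi⟩ := h g.toNat (by omega)
  exact hi (by simpa [Int.toNat_of_nonneg hg] using hdvd i)

theorem snoc_dotProduct_snoc {R : Type*} [CommSemiring R] {n : ℕ} (u x : Fin n → R) (s t : R) :
    (Fin.snoc u s : Fin (n + 1) → R) ⬝ᵥ Fin.snoc x t = u ⬝ᵥ x + s * t := by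
  simp [dotProduct, Fin.sum_univ_castSucc]

theorem det_of_snoc_snoc_one {R : Type*} [CommRing R] {n : ℕ} (A : Matrix (Fin n) (Fin n) R)
    (β γ : Fin n → R) :
    (Matrix.of (Fin.snoc (fun i => Fin.snoc (A i) (β i)) (Fin.snoc γ 1))).det =
      (Matrix.of fun i j => A i j - β i * γ j).det := by
  have hinl (k : Fin n) : Fin.castAdd 1 k = k.castSucc := rfl
  have hinr (k : Fin 1) : Fin.natAdd n k = Fin.last n := Fin.ext (by simp [Fin.fin_one_eq_zero k])
  have hblocks : reindex finSumFinEquiv.symm finSumFinEquiv.symm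
      (Matrix.of (Fin.snoc (fun i => Fin.snoc (A i) (β i)) (Fin.snoc γ 1))) =
      fromBlocks A (replicateCol (Fin 1) β) (replicateRow (Fin 1) γ) 1 := by
    ext (i | i) (j | j) <;> simp [hinl, hinr, Fin.fin_one_eq_zero]
  rw [← det_reindex_self finSumFinEquiv.symm, hblocks, det_fromBlocks_one₂₂]
  congr 1
  ext i j
  simp [mul_apply]

theorem span_range_eq_ker_of_linearIndependent {K V ι : Type*} [Field K] [AddCommGroup V]
    [Module K V] [FiniteDimensional K V] [Fintype ι] {c : ι → V} (hc : LinearIndependent K c)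
    (hdim : Module.finrank K V = Fintype.card ι + 1) {w : Module.Dual K V} (hw0 : w ≠ 0)
    (hw : ∀ i, w (c i) = 0) :
    Submodule.span K (Set.range c) = LinearMap.ker w := by
  refine Submodule.eq_of_le_of_finrank_eq ?_ ?_
  · rw [Submodule.span_le]
    rintro _ ⟨i, rfl⟩
    exact hw i
  · have := w.finrank_ker_add_one_of_ne_zero hw0
    rw [finrank_span_eq_card hc]
    omega

section DetSnoc

variable {K : Type*} [Field K] {n : ℕ}

def detSnocLinear (c : Fin n → Fin (n + 1) → K) : Module.Dual K (Fin (n + 1) → K) :=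
  (detRowAlternating : (Fin (n + 1) → K) [⋀^Fin (n + 1)]→ₗ[K] K).toMultilinearMap.toLinearMap
    (Fin.snoc c 0) (Fin.last n)

theorem detSnocLinear_apply (c : Fin n → Fin (n + 1) → K) (x : Fin (n + 1) → K) :
    detSnocLinear c x = (Matrix.of (Fin.snoc c x)).det := by
  simp only [detSnocLinear, MultilinearMap.toLinearMap_apply, Fin.update_snoc_last]
  rfl

variable {c : Fin n → Fin (n + 1) → K} (hc : LinearIndependent K c)
  {w : Module.Dual K (Fin (n + 1) → K)} (hw : ∀ i, w (c i) = 0) {v : Fin (n + 1) → K}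
  (hv : w v = 1)
include hc hw hv

theorem det_of_snoc_ne_zero : (Matrix.of (Fin.snoc c v)).det ≠ 0 := by
  have hspan : v ∉ Submodule.span K (Set.range c) := fun h => by
    have hker := Submodule.span_le.2 (by rintro _ ⟨i, rfl⟩; exact LinearMap.mem_ker.2 (hw i)) h
    rw [LinearMap.mem_ker, hv] at hker
    exact one_ne_zero hker
  exact ((isUnit_iff_isUnit_det _).1
    (linearIndependent_rows_iff_isUnit.1 (linearIndependent_finSnoc.2 ⟨hc, hspan⟩))).ne_zero

theorem det_of_snoc_eq_mul (x : Fin (n + 1) → K) :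
    (Matrix.of (Fin.snoc c x)).det = w x * (Matrix.of (Fin.snoc c v)).det := by
  have hker := span_range_eq_ker_of_linearIndependent hc (by simp) (by rintro rfl; simp at hv) hw
  have hmem : x - w x • v ∈ Submodule.span K (Set.range c) := by
    simp [hker, hv]
  have hzero : (Matrix.of (Fin.snoc c (x - w x • v))).det = 0 :=
    det_eq_zero_of_not_linearIndependent_rows fun h => (linearIndependent_finSnoc.1 h).2 hmem
  rw [← detSnocLinear_apply, map_sub, map_smul, detSnocLinear_apply, detSnocLinear_apply] at hzero
  simpa [sub_eq_zero] using hzero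

end DetSnoc

section Lattice

variable {n : ℕ}

theorem mem_dualLattice_iff {B : Matrix (Fin n) (Fin n) ℝ} {u : Fin n → ℝ} :
    u ∈ dualLattice B ↔ ∃ c : Fin n → ℤ, u ᵥ* B = fun j => (c j : ℝ) := by
  constructor
  · intro hu
    choose c hc using fun j => hu _ ⟨Pi.single j 1, rfl⟩
    refine ⟨c, funext fun j => ?_⟩
    rw [← hc j]
    have hsingle : (fun i => ((Pi.single j 1 : Fin n → ℤ) i : ℝ)) = Pi.single j 1 := by
      ext i
      simp [Pi.single_apply]
    change _ = u ⬝ᵥ (B *ᵥ _)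
    rw [hsingle, dotProduct_mulVec, dotProduct_single_one]
  · rintro ⟨c, hc⟩ _ ⟨m, rfl⟩
    refine ⟨c ⬝ᵥ m, ?_⟩
    change u ⬝ᵥ (B *ᵥ _) = _
    rw [dotProduct_mulVec, hc]
    simp [dotProduct]

/-- Basis matrix of `Λ × ℤ ⊂ ℝⁿ⁺¹` when `B` is one of `Λ`. -/
def liftMatrix (B : Matrix (Fin n) (Fin n) ℝ) : Matrix (Fin (n + 1)) (Fin (n + 1)) ℝ :=
  Matrix.of (Fin.snoc (fun i => Fin.snoc (B i) 0) (Fin.snoc 0 1))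

theorem liftMatrix_mulVec_snoc (B : Matrix (Fin n) (Fin n) ℝ) (x : Fin n → ℝ) (t : ℝ) :
    liftMatrix B *ᵥ Fin.snoc x t = Fin.snoc (B *ᵥ x) t := by
  ext i
  refine Fin.lastCases ?_ (fun i => ?_) i <;>
    simp [liftMatrix, mulVec, snoc_dotProduct_snoc]

theorem snoc_vecMul_liftMatrix (B : Matrix (Fin n) (Fin n) ℝ) (u : Fin n → ℝ) (s : ℝ) :
    Fin.snoc u s ᵥ* liftMatrix B = Fin.snoc (u ᵥ* B) s := by
  ext j
  refine Fin.lastCases ?_ (fun j => ?_) j <;>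
    simp [liftMatrix, vecMul, dotProduct, Fin.sum_univ_castSucc]

theorem det_liftMatrix (B : Matrix (Fin n) (Fin n) ℝ) : (liftMatrix B).det = B.det := by
  have h := det_of_snoc_snoc_one B 0 0
  simp only [Pi.zero_apply, mul_zero, sub_zero] at h
  exact h

theorem snoc_mem_latticeOf_liftMatrix {B : Matrix (Fin n) (Fin n) ℝ} {x : Fin n → ℝ}
    (hx : x ∈ latticeOf B) (k : ℤ) : Fin.snoc x (k : ℝ) ∈ latticeOf (liftMatrix B) := by
  obtain ⟨m, rfl⟩ := hx
  refine ⟨Fin.snoc m k, ?_⟩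
  rw [← liftMatrix_mulVec_snoc]
  congr 1
  ext i
  refine Fin.lastCases ?_ (fun i => ?_) i <;> simp

theorem abs_det_le_abs_det_of_forall_mem_latticeOf {P M : Matrix (Fin n) (Fin n) ℝ}
    (hM : ∀ i, M i ∈ latticeOf P) (h0 : M.det ≠ 0) : |P.det| ≤ |M.det| := by
  choose Z hZ using hM
  have hfac : M = (Matrix.of Z).map (Int.cast : ℤ → ℝ) * Pᵀ := by
    ext i j
    rw [hZ i]
    simp [mul_apply, mulVec, dotProduct, mul_comm]
  have hdet : M.det = ((Matrix.of Z).det : ℝ) * P.det := by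
    rw [hfac, det_mul, det_transpose, Int.cast_det]
  rw [hdet] at h0 ⊢
  have hZ1 : (1 : ℝ) ≤ |((Matrix.of Z).det : ℝ)| := by
    exact_mod_cast Int.one_le_abs (Int.cast_ne_zero.1 (left_ne_zero_of_mul h0))
  rw [abs_mul]
  exact le_mul_of_one_le_left (abs_nonneg _) hZ1

theorem exists_mem_latticeOf_liftMatrix_snoc_dotProduct_eq_one {B : Matrix (Fin n) (Fin n) ℝ}
    {u : Fin n → ℝ} (hu : u ∈ dualLattice B) {z : ℤ}
    (hprim : ¬∃ u' ∈ dualLattice B, ∃ z' : ℤ, ∃ k : ℕ, 2 ≤ k ∧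
      u = (k : ℝ) • u' ∧ z = (k : ℤ) * z') :
    ∃ v ∈ latticeOf (liftMatrix B), Fin.snoc u (z : ℝ) ⬝ᵥ v = 1 := by
  obtain ⟨c, hc⟩ := mem_dualLattice_iff.1 hu
  have hcoprime (k : ℕ) (hk : 2 ≤ k) : ∃ i, ¬(k : ℤ) ∣ (Fin.snoc c z : Fin (n + 1) → ℤ) i := by
    by_contra! hdvd
    choose d hd using fun j : Fin n => hdvd j.castSucc
    obtain ⟨z', hz'⟩ := hdvd (Fin.last n)
    have hk0 : (k : ℝ) ≠ 0 := by positivity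
    refine hprim ⟨(k : ℝ)⁻¹ • u, mem_dualLattice_iff.2 ⟨d, ?_⟩, z', k, hk, ?_, by simpa using hz'⟩
    · ext j
      simp only [Fin.snoc_castSucc] at hd
      simp [smul_vecMul, hc, hd, hk0]
    · rw [smul_smul, mul_inv_cancel₀ hk0, one_smul]
  obtain ⟨ζ, hζ⟩ := Int.exists_dotProduct_eq_one_of_forall_not_dvd _ hcoprime
  refine ⟨liftMatrix B *ᵥ fun k => (ζ k : ℝ), ⟨ζ, rfl⟩, ?_⟩
  rw [dotProduct_mulVec, snoc_vecMul_liftMatrix, hc]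
  simp only [dotProduct, Fin.sum_univ_castSucc, Fin.snoc_castSucc, Fin.snoc_last] at hζ ⊢
  exact_mod_cast hζ

end Lattice

theorem stmt16_general {n : ℕ} (B : Matrix (Fin n) (Fin n) ℝ)
    (b : Fin n → (Fin n → ℝ)) (hb : ∀ i, b i ∈ latticeOf B)
    (q : Fin n → ℕ) (α : Fin n → ℝ)
    (hind : LinearIndependent ℝ fun i => (Fin.snoc (b i) ((q i : ℝ)) : Fin (n + 1) → ℝ))
    (u : Fin n → ℝ) (hu : u ∈ dualLattice B) (z : ℤ)
    (hortho : ∀ i, ∑ j, u j * b i j + (z : ℝ) * (q i : ℝ) = 0)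
    (hprim : ¬∃ u' ∈ dualLattice B, ∃ z' : ℤ, ∃ k : ℕ, 2 ≤ k ∧
      u = (k : ℝ) • u' ∧ z = (k : ℤ) * z') :
    |Matrix.det (Matrix.of fun j i : Fin n => b i j - (q i : ℝ) * α j)| ≥
      |B.det| * |∑ j, u j * α j + (z : ℝ)| := by
  set c : Fin n → Fin (n + 1) → ℝ := fun i => Fin.snoc (b i) (q i : ℝ)
  set w := dotProductEquiv ℝ (Fin (n + 1)) (Fin.snoc u (z : ℝ))
  have hw (x : Fin n → ℝ) (t : ℝ) : w (Fin.snoc x t) = ∑ j, u j * x j + z * t :=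
    snoc_dotProduct_snoc ..
  have hcw (i : Fin n) : w (c i) = 0 := (hw _ _).trans (hortho i)
  obtain ⟨v, hvΛ, hv⟩ := exists_mem_latticeOf_liftMatrix_snoc_dotProduct_eq_one hu hprim
  have hschur : (Matrix.of fun j i => b i j - q i * α j).det =
      (Matrix.of (Fin.snoc c (Fin.snoc α 1))).det := by
    rw [← det_transpose]
    exact (det_of_snoc_snoc_one (Matrix.of b) (fun i => (q i : ℝ)) α).symm
  have hindex : |B.det| ≤ |(Matrix.of (Fin.snoc c v)).det| := by
    rw [← det_liftMatrix]
    refine abs_det_le_abs_det_of_forall_mem_latticeOf (fun r => ?_)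
      (det_of_snoc_ne_zero hind hcw hv)
    change (Fin.snoc c v : Fin (n + 1) → Fin (n + 1) → ℝ) r ∈ _
    refine Fin.lastCases ?_ (fun i => ?_) r
    · simpa using hvΛ
    · simpa [c] using snoc_mem_latticeOf_liftMatrix (hb i) (q i)
  rw [hschur, det_of_snoc_eq_mul hind hcw hv, hw, mul_one, abs_mul, mul_comm, ge_iff_le]
  exact mul_le_mul_of_nonneg_right hindex (abs_nonneg _)

theorem stmt16 {n : ℕ} (B : Matrix (Fin n) (Fin n) ℝ) (hB : IsUnit B.det)
    (Q : ℕ) (b : Fin n → (Fin n → ℝ)) (hb : ∀ i, b i ∈ latticeOf B)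
    (q : Fin n → ℕ) (hq : ∀ i, q i ≤ Q) (α : Fin n → ℝ)
    (hind : LinearIndependent ℝ fun i => (Fin.snoc (b i) ((q i : ℝ)) : Fin (n + 1) → ℝ))
    (u : Fin n → ℝ) (hu : u ∈ dualLattice B) (z : ℤ)
    (hortho : ∀ i, ∑ j, u j * b i j + (z : ℝ) * (q i : ℝ) = 0)
    (hnz : ¬(u = 0 ∧ z = 0))
    (hprim : ¬∃ u' ∈ dualLattice B, ∃ z' : ℤ, ∃ k : ℕ, 2 ≤ k ∧
      u = (k : ℝ) • u' ∧ z = (k : ℤ) * z') :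
    |Matrix.det (Matrix.of fun j i : Fin n => b i j - (q i : ℝ) * α j)| ≥
      |B.det| * |∑ j, u j * α j + (z : ℝ)| :=
  stmt16_general B b hb q α hind u hu z hortho hprim
end
end

section
/- Let K ⊂ ℝⁿ be a 0-symmetric convex body, a₁,…,aₙ linearly independent vectors, and λ₁ ≤ … ≤ λₙ positive reals with aᵢ ∈ λᵢK for each i. Then vol(K) ≥ (2ⁿ/n!) · |det(a₁,…,aₙ)| / (λ₁·…·λₙ). -/
open MeasureTheory Set Filter Pointwise

noncomputable section

lemma cross_mem {n : ℕ} {K : Set (Fin n → ℝ)} (hK : Convex ℝ K) (h0 : (0 : Fin n → ℝ) ∈ K)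
    (v : Fin n → (Fin n → ℝ)) (hv : ∀ i, v i ∈ K) (hv' : ∀ i, -v i ∈ K)
    (x : Fin n → ℝ) (hx : ∑ i, |x i| ≤ 1) : ∑ i, x i • v i ∈ K := by
  set t := ∑ i, |x i| with ht
  have ht0 : 0 ≤ t := Finset.sum_nonneg fun i _ => abs_nonneg _
  rcases eq_or_lt_of_le ht0 with h | h
  · have hz : ∀ i, x i = 0 := fun i => abs_eq_zero.mp <|
      le_antisymm (h ▸ Finset.single_le_sum (f := fun i => |x i|)
        (fun i _ => abs_nonneg _) (Finset.mem_univ i)) (abs_nonneg _)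
    simpa [hz] using h0
  · set w : Fin n → (Fin n → ℝ) := fun i => if 0 ≤ x i then v i else -v i with hw
    have hwK : ∀ i, w i ∈ K := fun i => by
      by_cases h' : 0 ≤ x i <;> simp [hw, h', hv i, hv' i]
    have hp : (∑ i, (|x i| / t) • w i) ∈ K :=
      hK.sum_mem (fun i _ => div_nonneg (abs_nonneg _) ht0)
        (by rw [← Finset.sum_div, ← ht]; field_simp) (fun i _ => hwK i)
    have key : ∑ i, x i • v i = t • (∑ i, (|x i| / t) • w i) + (1 - t) • (0 : Fin n → ℝ) := by
      rw [Finset.smul_sum]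
      simp only [smul_smul, smul_zero, add_zero]
      refine Finset.sum_congr rfl fun i _ => ?_
      rw [mul_div_cancel₀ _ (ne_of_gt h)]
      by_cases h' : 0 ≤ x i
      · simp [hw, h', abs_of_nonneg h']
      · push_neg at h'
        simp [hw, not_le.mpr h', abs_of_neg h', smul_neg, neg_smul]
    rw [key]
    exact hK hp h0 ht0 (by linarith) (by ring)

theorem stmt18 {n : ℕ} (K : Set (Fin n → ℝ)) (hKc : IsCompact K)
    (hKconv : Convex ℝ K) (hKint : (interior K).Nonempty) (hKsym : -K = K)
    (a : Fin n → (Fin n → ℝ)) (hind : LinearIndependent ℝ a)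
    (lam : Fin n → ℝ) (hpos : ∀ i, 0 < lam i) (hmono : Monotone lam)
    (ha : ∀ i, a i ∈ lam i • K) :
    (volume K).toReal ≥
      2 ^ n / (Nat.factorial n) *
        |Matrix.det (Matrix.of fun i j : Fin n => a j i)| / ∏ i, lam i := by
    -- 0 ∈ K
  obtain ⟨x₀, hx₀⟩ := hKint
  have hx₀K : x₀ ∈ K := interior_subset hx₀
  have hx₀K' : -x₀ ∈ K := by rw [← hKsym]; exact Set.neg_mem_neg.mpr hx₀K
  have h0K : (0 : Fin n → ℝ) ∈ K := by
    have := hKconv hx₀K hx₀K' (by norm_num : (0:ℝ) ≤ 1/2) (by norm_num : (0:ℝ) ≤ 1/2)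
      (by norm_num)
    simpa using this
  -- the vertices of the cross-polytope
  set v : Fin n → (Fin n → ℝ) := fun i => (lam i)⁻¹ • a i with hv_def
  have hv : ∀ i, v i ∈ K := by
    intro i
    obtain ⟨y, hy, hay⟩ := ha i
    have : v i = y := by
      rw [hv_def]
      simp only [← hay, smul_smul, inv_mul_cancel₀ (hpos i).ne', one_smul]
    rwa [this]
  have hv' : ∀ i, -v i ∈ K := fun i => by rw [← hKsym]; exact Set.neg_mem_neg.mpr (hv i)
  -- the linear map
  set A : Matrix (Fin n) (Fin n) ℝ := Matrix.of fun i j : Fin n => a j i with hA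
  set M : Matrix (Fin n) (Fin n) ℝ := Matrix.of fun i j : Fin n => (lam j)⁻¹ * A i j with hM
  set T := Matrix.toLin' M with hT
  set X : Set (Fin n → ℝ) := {x : Fin n → ℝ | ∑ i, |x i| ^ (1:ℝ) < 1} with hX
  have hXK : T '' X ⊆ K := by
    rintro _ ⟨x, hx, rfl⟩
    have hx' : ∑ i, |x i| ≤ 1 := by
      have : ∑ i, |x i| ^ (1:ℝ) < 1 := hx
      rw [show (∑ i, |x i| ^ (1:ℝ)) = ∑ i, |x i| from
        Finset.sum_congr rfl fun i _ => Real.rpow_one _] at this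
      exact this.le
    have hTx : T x = ∑ i, x i • v i := by
      funext j
      rw [hT, Matrix.toLin'_apply]
      simp only [Matrix.mulVec, dotProduct, hM, hA, Matrix.of_apply, Finset.sum_apply,
        Pi.smul_apply, hv_def, smul_eq_mul]
      exact Finset.sum_congr rfl fun i _ => by ring
    rw [hTx]
    exact cross_mem hKconv h0K v hv hv' x hx'
  have hvolX : volume X = ENNReal.ofReal (2 ^ n / n.factorial) := by
    rw [hX, MeasureTheory.volume_sum_rpow_lt_one (Fin n) le_rfl]
    congr 1
    have h1 : (1:ℝ)/1 + 1 = 2 := by norm_num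
    have h2 : (Fintype.card (Fin n) : ℝ) / 1 + 1 = (n : ℝ) + 1 := by
      simp [Fintype.card_fin]
    rw [h1, h2, Real.Gamma_two, Real.Gamma_nat_eq_factorial, Fintype.card_fin]
    norm_num
  have hdetT : LinearMap.det T = (∏ i, (lam i)⁻¹) * A.det := by
    rw [hT, LinearMap.det_toLin', hM, Matrix.det_mul_row]
  have hprodpos : 0 < ∏ i, lam i := Finset.prod_pos fun i _ => hpos i
  have habs : |LinearMap.det T| = |A.det| / ∏ i, lam i := by
    rw [hdetT, abs_mul, abs_of_pos (Finset.prod_pos fun i _ => inv_pos.mpr (hpos i)),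
      Finset.prod_inv_distrib, inv_mul_eq_div]
  have him : volume (T '' X) =
      ENNReal.ofReal (|A.det| / ∏ i, lam i) * ENNReal.ofReal (2 ^ n / n.factorial) := by
    rw [Measure.addHaar_image_linearMap, hvolX, habs]
  have hle : volume (T '' X) ≤ volume K := measure_mono hXK
  have hfin : volume K ≠ ⊤ := hKc.measure_lt_top.ne
  have hc : (0:ℝ) ≤ |A.det| / ∏ i, lam i := div_nonneg (abs_nonneg _) hprodpos.le
  have hc2 : (0:ℝ) ≤ 2 ^ n / (n.factorial : ℝ) := by positivity
  have := ENNReal.toReal_mono hfin hle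
  rw [him, ← ENNReal.ofReal_mul hc, ENNReal.toReal_ofReal (by positivity)] at this
  calc (volume K).toReal ≥ |A.det| / (∏ i, lam i) * (2 ^ n / n.factorial) := this
    _ = 2 ^ n / (Nat.factorial n) * |A.det| / ∏ i, lam i := by ring
end
end

section
/- Let K ⊂ ℝⁿ be an open 0-symmetric convex body, a₁,…,aₙ linearly independent, λ₁ ≤ … ≤ λₙ > 0, and define the Siegel map f : K → ℝⁿ by f(x) = λ₁c₀(x) + (λ₂−λ₁)c₁(x) + … + (λₙ−λ_{n−1})c_{n−1}(x), where c_k(x) is the center of gravity of K ∩ (x + span{a₁,…,a_k}). Then f is injective and vol(f(K)) = λ₁·λ₂·…·λₙ·vol(K). -/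
/-!
In the coordinates `ξ` with respect to the basis `a₀, …, a_{n-1}`, the centroid `c_k(x)` differs
from `x` only in the coordinates of index `< k`, and, being invariant under translation of `x`
along `span {a₀, …, a_{k-1}}`, it depends only on the coordinates of index `≥ k` of `x`. Hence the
`i`-th coordinate of `f x` is `λ_{i+1} ξ_i` plus a function of `ξ_{i+1}, …, ξ_{n-1}`: in these
coordinates `f` is triangular with diagonal `λ₁, …, λₙ`. Such a map is injective, and it is a
diagonal scaling followed by a shear `η ↦ η + g(η)` with `g_i` depending only on later
coordinates; by Fubini the shear preserves Lebesgue measure, so `vol (f K) = λ₁ ⋯ λₙ vol K`.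
-/

open MeasureTheory Set Filter Pointwise

noncomputable section

/-- The parameter set of the slice of `K` by the affine plane `x + span{a₀,…,a_{k-1}}`. -/
def sliceSet {n : ℕ} (K : Set (Fin n → ℝ)) (a : ℕ → (Fin n → ℝ)) (k : ℕ)
    (x : Fin n → ℝ) : Set (Fin k → ℝ) :=
  {t | (x + ∑ j : Fin k, t j • a (j : ℕ)) ∈ K}

/-- The center of gravity of the slice `K ∩ (x + span{a₀,…,a_{k-1}})`. -/
def cog {n : ℕ} (K : Set (Fin n → ℝ)) (a : ℕ → (Fin n → ℝ)) (k : ℕ)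
    (x : Fin n → ℝ) : Fin n → ℝ :=
  x + ∑ j : Fin k,
    ((∫ t in sliceSet K a k x, t j) / (volume (sliceSet K a k x)).toReal) • a (j : ℕ)

def DependsOnLaterCoords {n : ℕ} {α β : Type*} (g : Fin n → (Fin n → α) → β) : Prop :=
  ∀ i ξ ξ', (∀ j, i < j → ξ j = ξ' j) → g i ξ = g i ξ'

namespace DependsOnLaterCoords

variable {n : ℕ} {α β : Type*} {g : Fin n → (Fin n → α) → β}

theorem apply_update (hg : DependsOnLaterCoords g) {i j : Fin n}
    (hij : ¬ i < j) (ξ : Fin n → α) (t : α) : g i (Function.update ξ j t) = g i ξ :=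
  hg i _ _ fun l hil => Function.update_of_ne (by rintro rfl; exact hij hil) _ _

theorem of_truncate {m : Fin n → (Fin n → α) → β} [Zero α] :
    DependsOnLaterCoords fun i ξ => m i ((Ioi i).indicator ξ) :=
  fun i _ _ h => congrArg (m i) (Set.indicator_congr fun j hj => h j hj)

theorem injective_mul_add {R : Type*} [Ring R] [IsDomain R] {g : Fin n → (Fin n → R) → R}
    (hg : DependsOnLaterCoords g) {c : Fin n → R} (hc : ∀ i, c i ≠ 0) :
    Function.Injective fun ξ i => c i * ξ i + g i ξ := by
  intro ξ ξ' h
  funext i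
  induction i using WellFoundedGT.induction with
  | _ i ih =>
    have hi := congrFun h i
    simp only [hg i ξ ξ' ih, add_left_inj] at hi
    exact mul_left_cancel₀ (hc i) hi

theorem tail {g : Fin (n + 1) → (Fin (n + 1) → α) → β} [Zero α]
    (hg : DependsOnLaterCoords g) :
    DependsOnLaterCoords fun (i : Fin n) (y : Fin n → α) => g i.succ (Fin.cons 0 y) := by
  intro i y y' h
  refine hg _ _ _ fun j hj => ?_
  cases j using Fin.cases with
  | zero => exact absurd hj (Fin.not_lt_zero _)
  | succ j => exact h j (Fin.succ_lt_succ_iff.mp hj)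

theorem apply_cons_zero_tail {g : Fin (n + 1) → (Fin (n + 1) → α) → β} [Zero α]
    (hg : DependsOnLaterCoords g) (i : Fin (n + 1)) (ξ : Fin (n + 1) → α) :
    g i (Fin.cons 0 (Fin.tail ξ)) = g i ξ := by
  rw [← Fin.update_cons_zero (x := ξ 0), Fin.cons_self_tail]
  exact hg.apply_update (Fin.not_lt_zero i) ξ 0

end DependsOnLaterCoords

theorem MeasureTheory.MeasurePreserving.skew_add_left {α : Type*} [MeasureSpace α]
    [SFinite (volume : Measure α)] {φ : α → α} (hφ : MeasurePreserving φ) {h : α → ℝ}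
    (hh : Measurable h) : MeasurePreserving fun p : ℝ × α => (p.1 + h p.2, φ p.2) := by
  have hskew : MeasurePreserving (fun p : α × ℝ => (φ p.1, p.2 + h p.1))
      (volume.prod volume) (volume.prod volume) :=
    hφ.skew_product (measurable_snd.add (hh.comp measurable_fst))
      (ae_of_all _ fun y => (measurePreserving_add_right volume (h y)).map_eq)
  exact (Measure.measurePreserving_swap.comp hskew).comp Measure.measurePreserving_swap

theorem DependsOnLaterCoords.measurePreserving_add : ∀ {n : ℕ} {g : Fin n → (Fin n → ℝ) → ℝ},
    (∀ i, Measurable (g i)) → DependsOnLaterCoords g →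
    MeasurePreserving fun ξ i => ξ i + g i ξ
  | 0, g, _, _ => by
    rw [show (fun ξ i => ξ i + g i ξ) = id from Subsingleton.elim _ _]
    exact .id volume
  | n + 1, g, hmeas, hg => by
    have hcons : Measurable fun y : Fin n → ℝ => (Fin.cons 0 y : Fin (n + 1) → ℝ) := by fun_prop
    have htail := measurePreserving_add (fun i => (hmeas i.succ).comp hcons) hg.tail
    have hΦ := htail.skew_add_left ((hmeas 0).comp hcons)
    have he := volume_preserving_piFinSuccAbove (fun _ : Fin (n + 1) => ℝ) 0
    convert he.symm.comp (hΦ.comp he) using 1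
    funext ξ i
    cases i using Fin.cases with
    | zero => simp [hg.apply_cons_zero_tail]
    | succ i => simp [hg.apply_cons_zero_tail, Fin.tail]

theorem DependsOnLaterCoords.volume_image_mul_add {n : ℕ} {g : Fin n → (Fin n → ℝ) → ℝ}
    (hmeas : ∀ i, Measurable (g i)) (hg : DependsOnLaterCoords g) {c : Fin n → ℝ}
    (hc : ∀ i, c i ≠ 0) (E : Set (Fin n → ℝ)) :
    volume ((fun ξ i => c i * ξ i + g i ξ) '' E) = ENNReal.ofReal |∏ i, c i| * volume E := by
  set g' : Fin n → (Fin n → ℝ) → ℝ := fun i η => g i fun j => η j / c j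
  have hg' : DependsOnLaterCoords g' := fun i η η' h =>
    hg i _ _ fun j hj => by simp only [h j hj]
  set S : (Fin n → ℝ) → Fin n → ℝ := fun η i => η i + g' i η
  have hS : MeasurePreserving S :=
    hg'.measurePreserving_add fun i => (hmeas i).comp (by fun_prop)
  have hSinj : Function.Injective S := by
    simpa using hg'.injective_mul_add (c := 1) fun _ => one_ne_zero
  have hfactor : (fun ξ i => c i * ξ i + g i ξ) = S ∘ Matrix.toLin' (Matrix.diagonal c) := by
    funext ξ i
    simp [S, g', Matrix.mulVec_diagonal, mul_div_cancel_left₀ _ (hc _)]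
  rw [hfactor, image_comp, ← hS.measure_preimage_emb (hS.measurable.measurableEmbedding hSinj),
    preimage_image_eq _ hSinj, Measure.addHaar_image_linearMap, LinearMap.det_toLin',
    Matrix.det_diagonal]

-- Triangularity of `F` on `E`: `F ξ i - c i * ξ i` only sees the coordinates of `ξ` after `i`.
theorem injOn_and_volume_image_of_triangular {n : ℕ} {F : (Fin n → ℝ) → Fin n → ℝ}
    (hF : Measurable F) {c : Fin n → ℝ} (hc : ∀ i, c i ≠ 0) {E : Set (Fin n → ℝ)}
    (hFE : ∀ ξ ∈ E, ∀ i, F ξ i = c i * ξ i + F ((Ioi i).indicator ξ) i) :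
    InjOn F E ∧ volume (F '' E) = ENNReal.ofReal |∏ i, c i| * volume E := by
  set g : Fin n → (Fin n → ℝ) → ℝ := fun i ξ => F ((Ioi i).indicator ξ) i
  have hg : DependsOnLaterCoords g := DependsOnLaterCoords.of_truncate (m := fun i ζ => F ζ i)
  have hmeas : ∀ i, Measurable (g i) := fun i => by
    refine (measurable_pi_apply i).comp (hF.comp (measurable_pi_lambda _ fun j => ?_))
    simp only [indicator_apply]
    split_ifs
    exacts [measurable_pi_apply j, measurable_const]
  have hEq : EqOn (fun ξ i => c i * ξ i + g i ξ) F E := fun ξ hξ => (funext (hFE ξ hξ)).symm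
  exact ⟨(hg.injective_mul_add hc).injOn.congr hEq,
    hEq.image_eq ▸ hg.volume_image_mul_add hmeas hc E⟩

section Slices

variable {n k : ℕ} {K : Set (Fin n → ℝ)} {a : ℕ → Fin n → ℝ}

theorem sliceSet_add_sum_smul (x : Fin n → ℝ) (s : Fin k → ℝ) :
    sliceSet K a k (x + ∑ j, s j • a j) = (· + s) ⁻¹' sliceSet K a k x := by
  ext t
  simp only [sliceSet, mem_ofPred_eq, mem_preimage, Pi.add_apply, add_smul,
    Finset.sum_add_distrib]
  rw [add_assoc, add_comm (∑ j, s j • a j)]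

theorem isOpen_sliceSet (hKo : IsOpen K) (x : Fin n → ℝ) : IsOpen (sliceSet K a k x) :=
  hKo.preimage (by fun_prop)

theorem isBounded_sliceSet (hKb : Bornology.IsBounded K)
    (ha : LinearIndependent ℝ fun j : Fin k => a j) (x : Fin n → ℝ) :
    Bornology.IsBounded (sliceSet K a k x) := by
  obtain ⟨C, -, hC⟩ := (Fintype.linearCombination ℝ fun j : Fin k => a j).exists_antilipschitzWith
    (LinearMap.ker_eq_bot.mpr (linearIndependent_iff_injective_fintypeLinearCombination.mp ha))
  simpa [sliceSet, Fintype.linearCombination_apply, preimage] using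
    hC.isBounded_preimage ((isometry_add_left x).antilipschitz.isBounded_preimage hKb)

theorem zero_mem_sliceSet {x : Fin n → ℝ} (hx : x ∈ K) : 0 ∈ sliceSet K a k x := by
  simpa [sliceSet] using hx

theorem setIntegral_preimage_add_right_apply {T : Set (Fin k → ℝ)} (hTfin : volume T ≠ ⊤)
    {j : Fin k} (hint : IntegrableOn (fun t => t j) T) (s : Fin k → ℝ) :
    ∫ t in (· + s) ⁻¹' T, t j = (∫ t in T, t j) - (volume T).toReal * s j := by
  have := (measurePreserving_add_right volume s).setIntegral_preimage_emb
    (Homeomorph.addRight s).measurableEmbedding (fun u => u j - s j) T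
  simp only [Pi.add_apply, add_sub_cancel_right] at this
  rw [this, integral_sub hint (integrableOn_const hTfin), setIntegral_const, smul_eq_mul,
    measureReal_def]

theorem cog_add_sum_smul (hKo : IsOpen K) (hKb : Bornology.IsBounded K)
    (ha : LinearIndependent ℝ fun j : Fin k => a j) {x : Fin n → ℝ} (hx : x ∈ K)
    (s : Fin k → ℝ) : cog K a k (x + ∑ j, s j • a j) = cog K a k x := by
  have hbdd := isBounded_sliceSet hKb ha x
  have hvol : (volume (sliceSet K a k x)).toReal ≠ 0 := ENNReal.toReal_ne_zero.mpr
    ⟨((isOpen_sliceSet hKo x).measure_pos volume ⟨0, zero_mem_sliceSet hx⟩).ne',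
      hbdd.measure_lt_top.ne⟩
  have hcoord (j : Fin k) :
      (∫ t in (· + s) ⁻¹' sliceSet K a k x, t j) / (volume ((· + s) ⁻¹' sliceSet K a k x)).toReal
        = (∫ t in sliceSet K a k x, t j) / (volume (sliceSet K a k x)).toReal - s j := by
    obtain ⟨R, hR⟩ := hbdd.subset_closedBall 0
    have hint : IntegrableOn (fun t => t j) (sliceSet K a k x) :=
      ((continuous_apply j).continuousOn.integrableOn_compact
        (isCompact_closedBall 0 R)).mono_set hR
    rw [measure_preimage_add_right,
      setIntegral_preimage_add_right_apply hbdd.measure_lt_top.ne hint s, sub_div,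
      mul_div_cancel_left₀ _ hvol]
  simp only [cog, sliceSet_add_sum_smul, hcoord, sub_smul, Finset.sum_sub_distrib]
  abel

theorem measurable_cog (hKo : IsOpen K) (a : ℕ → Fin n → ℝ) (k : ℕ) :
    Measurable (cog K a k) := by
  set S : Set ((Fin n → ℝ) × (Fin k → ℝ)) := {p | p.1 + ∑ j, p.2 j • a j ∈ K}
  have hS : MeasurableSet S := (hKo.preimage (by fun_prop)).measurableSet
  have hnum (j : Fin k) : Measurable fun x => ∫ t in sliceSet K a k x, t j := by
    have := (((measurable_pi_apply j).comp measurable_snd).indicator hS).stronglyMeasurable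
      |>.integral_prod_right' (ν := volume)
    convert this.measurable using 2 with x
    change ∫ t in Prod.mk x ⁻¹' S, t j = _
    rw [← integral_indicator (hS.preimage measurable_prodMk_left)]
    rfl
  have hden : Measurable fun x => (volume (sliceSet K a k x)).toReal :=
    (measurable_measure_prodMk_left hS).ennreal_toReal
  unfold cog
  fun_prop

end Slices

section Coordinates

variable {n k : ℕ} {K : Set (Fin n → ℝ)} {a : ℕ → Fin n → ℝ}
  {b : Module.Basis (Fin n) ℝ (Fin n → ℝ)}

theorem linearIndependent_of_basis_eq (hb : ∀ i, b i = a i) (hk : k ≤ n) :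
    LinearIndependent ℝ fun j : Fin k => a j := by
  simpa [Function.comp_def, hb] using
    b.linearIndependent.comp (Fin.castLE hk) (Fin.castLE_injective hk)

theorem equivFun_sum_smul_of_le (hb : ∀ i, b i = a i) (hk : k ≤ n) (t : Fin k → ℝ)
    {i : Fin n} (hi : k ≤ i) : b.equivFun (∑ j, t j • a j) i = 0 := by
  have ha (j : Fin k) : a j = b (Fin.castLE hk j) := (hb (Fin.castLE hk j)).symm
  simp only [ha, map_sum, map_smul, Finset.sum_apply, Pi.smul_apply, Module.Basis.equivFun_self,
    smul_eq_mul]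
  refine Finset.sum_eq_zero fun j _ => ?_
  rw [if_neg (fun h => by have := congrArg Fin.val h; simp at this; omega), mul_zero]

theorem equivFun_cog_of_le (hb : ∀ i, b i = a i) (hk : k ≤ n) {i : Fin n} (hi : k ≤ i)
    (x : Fin n → ℝ) : b.equivFun (cog K a k x) i = b.equivFun x i := by
  simp only [cog, map_add, Pi.add_apply, equivFun_sum_smul_of_le hb hk _ hi, add_zero]

theorem exists_eq_add_sum_smul_of_equivFun_eq (hb : ∀ i, b i = a i) (hk : k ≤ n)
    {x y : Fin n → ℝ} (h : ∀ i : Fin n, k ≤ i → b.equivFun x i = b.equivFun y i) :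
    ∃ s : Fin k → ℝ, y = x + ∑ j, s j • a j := by
  refine ⟨fun j => b.equivFun (y - x) (Fin.castLE hk j), ?_⟩
  rw [← sub_eq_iff_eq_add']
  conv_lhs => rw [← b.sum_equivFun (y - x)]
  refine (Fintype.sum_of_injective _ (Fin.castLE_injective hk) _ _ (fun i hi => ?_)
    fun j => by rw [hb]; rfl).symm
  have hki : k ≤ i := by
    by_contra! hik
    exact hi ⟨⟨i, hik⟩, rfl⟩
  rw [map_sub, Pi.sub_apply, h i hki, sub_self, zero_smul]

theorem cog_eq_of_equivFun_eq (hKo : IsOpen K) (hKb : Bornology.IsBounded K)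
    (hb : ∀ i, b i = a i) (hk : k ≤ n) {x y : Fin n → ℝ} (hx : x ∈ K)
    (h : ∀ i : Fin n, k ≤ i → b.equivFun x i = b.equivFun y i) :
    cog K a k y = cog K a k x := by
  obtain ⟨s, rfl⟩ := exists_eq_add_sum_smul_of_equivFun_eq hb hk h
  exact cog_add_sum_smul hKo hKb (linearIndependent_of_basis_eq hb hk) hx s

end Coordinates

def siegelMap {n : ℕ} (K : Set (Fin n → ℝ)) (a : ℕ → Fin n → ℝ) (lam : ℕ → ℝ)
    (x : Fin n → ℝ) : Fin n → ℝ :=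
  ∑ k ∈ Finset.range n, (lam (k + 1) - lam k) • cog K a k x

theorem measurable_siegelMap {n : ℕ} {K : Set (Fin n → ℝ)} (hKo : IsOpen K)
    (a : ℕ → Fin n → ℝ) (lam : ℕ → ℝ) : Measurable (siegelMap K a lam) :=
  Finset.measurable_sum _ fun k _ => (measurable_cog hKo a k).const_smul (lam (k + 1) - lam k)

theorem equivFun_siegelMap {n : ℕ} {K : Set (Fin n → ℝ)} (hKo : IsOpen K)
    (hKb : Bornology.IsBounded K) {a : ℕ → Fin n → ℝ} {b : Module.Basis (Fin n) ℝ (Fin n → ℝ)}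
    (hb : ∀ i, b i = a i) {lam : ℕ → ℝ} (hlam0 : lam 0 = 0) {ξ : Fin n → ℝ}
    (hξ : b.equivFun.symm ξ ∈ K) (i : Fin n) :
    b.equivFun (siegelMap K a lam (b.equivFun.symm ξ)) i = lam (i + 1) * ξ i
      + b.equivFun (siegelMap K a lam (b.equivFun.symm ((Ioi i).indicator ξ))) i := by
  set e := b.equivFun
  -- `c_k` moves only the coordinates below `k`, and those only through coordinates `≥ k`
  have hcog : ∀ k ∈ Finset.range n, e (cog K a k (e.symm ξ)) i
      = (if k ≤ i then ξ i else 0) + e (cog K a k (e.symm ((Ioi i).indicator ξ))) i := by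
    intro k hk
    have hkn : k ≤ n := (Finset.mem_range.mp hk).le
    by_cases hki : k ≤ i
    · rw [if_pos hki, equivFun_cog_of_le hb hkn hki, equivFun_cog_of_le hb hkn hki,
        e.apply_symm_apply, e.apply_symm_apply, indicator_of_notMem self_notMem_Ioi, add_zero]
    · rw [if_neg hki, zero_add]
      refine congrArg (e · i) (cog_eq_of_equivFun_eq hKo hKb hb hkn hξ fun j hj => ?_).symm
      rw [LinearEquiv.apply_symm_apply, LinearEquiv.apply_symm_apply,
        indicator_of_mem (mem_Ioi.mpr (by rw [Fin.lt_def]; omega))]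
  have htelescope : ∑ k ∈ Finset.range n, (lam (k + 1) - lam k) * (if k ≤ i then ξ i else 0)
      = lam (i + 1) * ξ i := by
    have hrange : (Finset.range n).filter (· ≤ (i : ℕ)) = Finset.range (i + 1) := by
      ext k
      simp only [Finset.mem_filter, Finset.mem_range]
      omega
    simp only [mul_ite, mul_zero]
    rw [← Finset.sum_filter, hrange, ← Finset.sum_mul, Finset.sum_range_sub, hlam0, sub_zero]
  simp only [siegelMap, map_sum, map_smul, Finset.sum_apply, Pi.smul_apply, smul_eq_mul]
  rw [Finset.sum_congr rfl fun k hk => by rw [hcog k hk, mul_add], Finset.sum_add_distrib,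
    htelescope]

theorem addHaar_image_eq_mul_of_conj {E : Type*} [NormedAddCommGroup E] [NormedSpace ℝ E]
    [MeasurableSpace E] [BorelSpace E] [FiniteDimensional ℝ E] (μ : Measure E)
    [μ.IsAddHaarMeasure] {f : E → E} (e : E ≃ₗ[ℝ] E) {s : Set E} {r : ENNReal}
    (h : μ ((e ∘ f ∘ e.symm) '' (e '' s)) = r * μ (e '' s)) : μ (f '' s) = r * μ s := by
  have hsymm (t : Set E) :
      μ (e.symm '' t) = ENNReal.ofReal |LinearMap.det (e.symm : E →ₗ[ℝ] E)| * μ t :=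
    Measure.addHaar_image_linearMap μ _ t
  have hf : f '' s = e.symm '' ((e ∘ f ∘ e.symm) '' (e '' s)) := by simp [image_image]
  have hs : s = e.symm '' (e '' s) := by simp [image_image]
  rw [hf, hsymm, h, mul_left_comm, ← hsymm, ← hs]

theorem stmt19_general {n : ℕ} (K : Set (Fin n → ℝ)) (hKo : IsOpen K)
    (hKb : Bornology.IsBounded K)
    (a : ℕ → (Fin n → ℝ)) (hind : LinearIndependent ℝ fun i : Fin n => a (i : ℕ))
    (lam : ℕ → ℝ) (hlam0 : lam 0 = 0) (hlam1 : 0 < lam 1)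
    (hmono : ∀ i : ℕ, 1 ≤ i → i < n → lam i ≤ lam (i + 1)) :
    Set.InjOn (fun x => ∑ k ∈ Finset.range n, (lam (k + 1) - lam k) • cog K a k x) K ∧
    (volume ((fun x => ∑ k ∈ Finset.range n, (lam (k + 1) - lam k) • cog K a k x) '' K)).toReal
      = (∏ k ∈ Finset.range n, lam (k + 1)) * (volume K).toReal := by
  change InjOn (siegelMap K a lam) K ∧ (volume (siegelMap K a lam '' K)).toReal = _
  have hpos : ∀ k < n, 0 < lam (k + 1) := by
    intro k
    induction k with
    | zero => exact fun _ => hlam1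
    | succ k ih => exact fun hk => (ih (by omega)).trans_le (hmono (k + 1) (by omega) hk)
  classical
  set b := basisOfPiSpaceOfLinearIndependent hind
  have hb : ∀ i, b i = a i := fun i => by simp [b]
  set e := b.equivFun
  have hF : Measurable (e ∘ siegelMap K a lam ∘ e.symm) :=
    e.toContinuousLinearEquiv.continuous.measurable.comp
      ((measurable_siegelMap hKo a lam).comp e.symm.toContinuousLinearEquiv.continuous.measurable)
  obtain ⟨hinj, hvol⟩ := injOn_and_volume_image_of_triangular hF
    (c := fun i => lam (i + 1)) (fun i => (hpos i i.2).ne') (E := e '' K)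
    fun ξ hξ i =>
      equivFun_siegelMap hKo hKb hb hlam0 (by rwa [e.image_eq_preimage_symm] at hξ) i
  refine ⟨fun x hx y hy hxy => e.injective ?_, ?_⟩
  · exact hinj (mem_image_of_mem e hx) (mem_image_of_mem e hy) (by simp [hxy])
  · rw [addHaar_image_eq_mul_of_conj volume e hvol, ENNReal.toReal_mul,
      ENNReal.toReal_ofReal (abs_nonneg _), Fin.prod_univ_eq_prod_range (fun k => lam (k + 1)),
      abs_of_pos (Finset.prod_pos fun k hk => hpos k (Finset.mem_range.mp hk))]

theorem stmt19 {n : ℕ} (K : Set (Fin n → ℝ)) (hKo : IsOpen K) (hKconv : Convex ℝ K)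
    (hKb : Bornology.IsBounded K) (hKne : K.Nonempty) (hKsym : -K = K)
    (a : ℕ → (Fin n → ℝ)) (hind : LinearIndependent ℝ fun i : Fin n => a (i : ℕ))
    (lam : ℕ → ℝ) (hlam0 : lam 0 = 0) (hlam1 : 0 < lam 1)
    (hmono : ∀ i : ℕ, 1 ≤ i → i < n → lam i ≤ lam (i + 1)) :
    Set.InjOn (fun x => ∑ k ∈ Finset.range n, (lam (k + 1) - lam k) • cog K a k x) K ∧
    (volume ((fun x => ∑ k ∈ Finset.range n, (lam (k + 1) - lam k) • cog K a k x) '' K)).toReal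
      = (∏ k ∈ Finset.range n, lam (k + 1)) * (volume K).toReal :=
  stmt19_general K hKo hKb a hind lam hlam0 hlam1 hmono
end
end
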